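/- Let (D_n, Z) and (D_n', Z') be pairs arising from stochastically increasing Bernoulli mixture models with the same default probability π_n ∈ (0,1), and suppose Z and Z' are equal in distribution. Then G_{D_n,Z}(s) ≥ G_{D_n',Z'}(s) for all s ∈ [0,1] if and only if P(D_n = 1, Z > z) ≤ P(D_n' = 1, Z' > z) for all z ∈ ℝ. -/

import Mathlib

open MeasureTheory ProbabilityTheory Set

noncomputable section

variable {Ω : Type*} [MeasurableSpace Ω]

/-- The measure `P` is atomless: every non-null measurable set contains a measurable
subset of strictly smaller positive measure. -/
def MeasureAtomless (P : Measure Ω) : Prop :=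
  ∀ s : Set Ω, MeasurableSet s → P s ≠ 0 →
    ∃ t ⊆ s, MeasurableSet t ∧ 0 < P t ∧ P t < P s

/-- Distribution function `F_Z` of a real random variable `Z` under `P`. -/
def distFun (P : Measure Ω) (Z : Ω → ℝ) (z : ℝ) : ℝ :=
  (P {ω | Z ω ≤ z}).toReal

/-- Generalized inverse `F⁻¹(t) = inf {x | t ≤ F x}`. -/
def qinv (F : ℝ → ℝ) (t : ℝ) : ℝ :=
  sInf {x : ℝ | t ≤ F x}

/-- Bernoulli mixture model `(D₁,…,D_N, Z)` with default probabilities `π` and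
(fixed versions of) conditional default probability functions `p n`:
each `Dₙ` is `{0,1}`-valued with `P(Dₙ = 1) = πₙ`, `pₙ` is a version of the conditional
probability `P(Dₙ = 1 | Z = ·)`, and `D₁,…,D_N` are conditionally independent given `Z`. -/
structure IsBMM (P : Measure Ω) {N : ℕ} (D : Fin N → Ω → ℝ) (Z : Ω → ℝ)
    (π : Fin N → ℝ) (p : Fin N → ℝ → ℝ) : Prop where
  measD : ∀ n, Measurable (D n)
  measZ : Measurable Z
  measp : ∀ n, Measurable (p n)
  values : ∀ n ω, D n ω = 0 ∨ D n ω = 1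
  pi_mem : ∀ n, π n ∈ Icc (0:ℝ) 1
  prob : ∀ n, P {ω | D n ω = 1} = ENNReal.ofReal (π n)
  p_mem : ∀ n z, p n z ∈ Icc (0:ℝ) 1
  condVersion : ∀ n (B : Set ℝ), MeasurableSet B →
    P ({ω | D n ω = 1} ∩ Z ⁻¹' B) = ENNReal.ofReal (∫ z in B, p n z ∂(P.map Z))
  condIndep : ∀ (d : Fin N → Bool) (B : Set ℝ), MeasurableSet B →
    P ((⋂ n, {ω | D n ω = (if d n then (1:ℝ) else 0)}) ∩ Z ⁻¹' B)
      = ENNReal.ofReal (∫ z in B, ∏ n, (if d n then p n z else 1 - p n z) ∂(P.map Z))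

/-- Stochastically increasing Bernoulli mixture model: a BMM in which every
conditional default probability function `pₙ` is increasing. -/
structure IsSIBMM (P : Measure Ω) {N : ℕ} (D : Fin N → Ω → ℝ) (Z : Ω → ℝ)
    (π : Fin N → ℝ) (p : Fin N → ℝ → ℝ) extends IsBMM P D Z π p : Prop where
  mono : ∀ n, Monotone (p n)

/-- The default integral function `G_{D,Z}(s) = ∫_0^s p(F_Z^{-1}(t)) dt`. -/
def defaultIntegral (P : Measure Ω) (Z : Ω → ℝ) (p : ℝ → ℝ) (s : ℝ) : ℝ :=
  ∫ t in (0:ℝ)..s, p (qinv (distFun P Z) t)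

/-- Convex order of (nonnegative, integrable) random variables: `E[φ(X)] ≤ E[φ(Y)]`
for every convex `φ : [0,∞) → ℝ` such that both expectations exist. -/
def ConvexOrder (P : Measure Ω) (X Y : Ω → ℝ) : Prop :=
  ∀ φ : ℝ → ℝ, ConvexOn ℝ (Ici (0:ℝ)) φ →
    Integrable (fun ω => φ (X ω)) P → Integrable (fun ω => φ (Y ω)) P →
    ∫ ω, φ (X ω) ∂P ≤ ∫ ω, φ (Y ω) ∂P

/-- `X₁,…,X_N` are conditionally independent given `Y`: there are (versions of the)
conditional distribution functions `qₙ(x, ·)` of `Xₙ` given `Y` whose product is a version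
of the conditional joint distribution function. -/
def CondIndepGiven (P : Measure Ω) {N : ℕ} (X : Fin N → Ω → ℝ) (Y : Ω → ℝ) : Prop :=
  ∃ q : Fin N → ℝ → ℝ → ℝ,
    (∀ n x, Measurable (q n x)) ∧
    (∀ n x y, q n x y ∈ Icc (0:ℝ) 1) ∧
    (∀ n (x : ℝ) (B : Set ℝ), MeasurableSet B →
      P ({ω | X n ω ≤ x} ∩ Y ⁻¹' B) = ENNReal.ofReal (∫ y in B, q n x y ∂(P.map Y))) ∧
    (∀ (x : Fin N → ℝ) (B : Set ℝ), MeasurableSet B →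
      P ((⋂ n, {ω | X n ω ≤ x n}) ∩ Y ⁻¹' B)
        = ENNReal.ofReal (∫ y in B, ∏ n, q n (x n) y ∂(P.map Y)))

/-- Bivariate copula: 2-increasing with the usual boundary conditions. -/
def IsCopula (C : ℝ → ℝ → ℝ) : Prop :=
  (∀ u ∈ Icc (0:ℝ) 1, C u 0 = 0 ∧ C u 1 = u) ∧
  (∀ v ∈ Icc (0:ℝ) 1, C 0 v = 0 ∧ C 1 v = v) ∧
  (∀ u₁ u₂ v₁ v₂ : ℝ, u₁ ∈ Icc (0:ℝ) 1 → u₂ ∈ Icc (0:ℝ) 1 →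
    v₁ ∈ Icc (0:ℝ) 1 → v₂ ∈ Icc (0:ℝ) 1 → u₁ ≤ u₂ → v₁ ≤ v₂ →
    0 ≤ C u₂ v₂ - C u₁ v₂ - C u₂ v₁ + C u₁ v₁)

/-- A copula is stochastically increasing (SI) iff `v ↦ C(u,v)` is concave for every `u`. -/
def IsSI (C : ℝ → ℝ → ℝ) : Prop :=
  ∀ u ∈ Icc (0:ℝ) 1, ConcaveOn ℝ (Icc (0:ℝ) 1) (fun v => C u v)

/-- Partial derivative `∂₂C(u,v)` of a copula w.r.t. its second argument
(the conditional distribution function `C(u|v)`). -/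
def copDeriv₂ (C : ℝ → ℝ → ℝ) (u v : ℝ) : ℝ := deriv (fun w => C u w) v

/-- Generalized inverse `C^{-1}(t|v) = inf {u ∈ [0,1] | ∂₂C(u,v) ≥ t}`. -/
def condInv (C : ℝ → ℝ → ℝ) (t v : ℝ) : ℝ :=
  sInf {u : ℝ | u ∈ Icc (0:ℝ) 1 ∧ t ≤ copDeriv₂ C u v}

/-- Survival copula `Ĉ(u,v) = u + v − 1 + C(1−u, 1−v)`. -/
def survCop (C : ℝ → ℝ → ℝ) (u v : ℝ) : ℝ :=
  u + v - 1 + C (1 - u) (1 - v)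

/-- `U` is uniformly distributed on `(0,1)` under `P`. -/
def IsUniform01 (P : Measure Ω) (U : Ω → ℝ) : Prop :=
  ∀ x ∈ Icc (0:ℝ) 1, P {ω | U ω ≤ x} = ENNReal.ofReal x

/-- The Clayton copula with parameter `θ > 0`. -/
def clayton (θ : ℝ) (u v : ℝ) : ℝ :=
  if u = 0 ∨ v = 0 then 0
  else (u ^ (-θ) + v ^ (-θ) - 1) ^ (-1 / θ)

/-- `g` is the increasing rearrangement of `f` on `(0,1)`. -/
def IsIncreasingRearrangement (f g : ℝ → ℝ) : Prop :=
  MonotoneOn g (Ioo (0:ℝ) 1) ∧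
  (∀ x ∈ Ioo (0:ℝ) 1, (∫ t in x..(1:ℝ), f t) ≤ ∫ t in x..(1:ℝ), g t) ∧
  (∫ t in (0:ℝ)..(1:ℝ), f t) = ∫ t in (0:ℝ)..(1:ℝ), g t

end

/-!
With `F = F_Z = F_{Z'}` and `μ` the law of `Z`, the quantile transform gives
`G_{D,Z}(F z) = E[p(Z); Z ≤ z]`, hence `P(D = 1, Z > z) = π - G_{D,Z}(F z)`, and likewise for
`(D', Z')`. So the orthant ordering is exactly `G_{D',Z'} ≤ G_{D,Z}` on the range of `F`.
Off the closure of that range, `s ∈ (F(z-), F(z))` for the jump point `z = F⁻¹(s)`, and there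
`F⁻¹ ≡ z`, so both default integral functions are affine in `s`; their difference, nonnegative at
both (limit) endpoints, is nonnegative in between.
-/

open Filter Topology Function

section Quantile

variable {μ : Measure ℝ}

theorem nonempty_setOf_le_cdf {t : ℝ} (ht : t < 1) : {x : ℝ | t ≤ cdf μ x}.Nonempty :=
  ((tendsto_cdf_atTop μ).eventually (eventually_ge_nhds ht)).exists

theorem bddBelow_setOf_le_cdf {t : ℝ} (ht : 0 < t) : BddBelow {x : ℝ | t ≤ cdf μ x} := by
  obtain ⟨x₀, hx₀⟩ := ((tendsto_cdf_atBot μ).eventually (eventually_lt_nhds ht)).exists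
  exact ⟨x₀, fun x hx => le_of_not_gt fun hxx₀ => (hx.trans ((cdf μ).mono hxx₀.le)).not_gt hx₀⟩

theorem qinv_cdf_le_iff {t z : ℝ} (ht : t ∈ Ioo 0 1) : qinv (cdf μ) t ≤ z ↔ t ≤ cdf μ z := by
  refine ⟨fun h => ?_, fun h => csInf_le (bddBelow_setOf_le_cdf ht.1) h⟩
  have hright : ∀ x, z < x → t ≤ cdf μ x := fun x hx => by
    obtain ⟨y, hy, hyx⟩ := exists_lt_of_csInf_lt (nonempty_setOf_le_cdf ht.2) (h.trans_lt hx)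
    exact hy.trans ((cdf μ).mono hyx.le)
  exact ge_of_tendsto ((cdf μ).right_continuous z |>.mono Ioi_subset_Ici_self).tendsto
    (eventually_nhdsWithin_of_forall hright)

theorem monotoneOn_qinv_cdf : MonotoneOn (qinv (cdf μ)) (Ioo 0 1) := fun _ ht _ ht' htt' =>
  csInf_le_csInf (bddBelow_setOf_le_cdf ht.1) (nonempty_setOf_le_cdf ht'.2)
    fun _ hx => htt'.trans hx

theorem inter_preimage_qinv_cdf_Iic_ae_eq (z : ℝ) :
    (Ioo 0 1 ∩ qinv (cdf μ) ⁻¹' Iic z : Set ℝ) =ᵐ[volume] Ioc 0 (cdf μ z) := by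
  have hset : Ioo 0 1 ∩ qinv (cdf μ) ⁻¹' Iic z = Ioo 0 1 ∩ Iic (cdf μ z) := by
    ext t
    simp only [mem_inter_iff, mem_preimage, mem_Iic, and_congr_right_iff]
    exact fun ht => qinv_cdf_le_iff ht
  have hIoc : Ioc 0 (cdf μ z) = Ioc 0 1 ∩ Iic (cdf μ z) := by
    rw [Ioc_inter_Iic, inf_eq_right.mpr (cdf_le_one μ z)]
  rw [hset, hIoc]
  exact Ioo_ae_eq_Ioc.inter (ae_eq_refl _)

theorem aemeasurable_qinv_cdf : AEMeasurable (qinv (cdf μ)) (volume.restrict (Ioo 0 1)) :=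
  aemeasurable_restrict_of_monotoneOn measurableSet_Ioo monotoneOn_qinv_cdf

theorem qinv_eq_of_leftLim_lt {F : ℝ → ℝ} (hF : Monotone F) {t z : ℝ}
    (hlt : leftLim F z < t) (hle : t ≤ F z) : qinv F t = z :=
  IsLeast.csInf_eq ⟨hle, fun _ hx =>
    le_of_not_gt fun hxz => (hF.le_leftLim hxz).not_gt (hlt.trans_le hx)⟩

theorem leftLim_cdf_qinv_le {s : ℝ} (hs : s ∈ Ioo 0 1) : leftLim (cdf μ) (qinv (cdf μ) s) ≤ s :=
  le_of_tendsto ((cdf μ).mono.tendsto_leftLim _) <| eventually_nhdsWithin_of_forall fun _ hw =>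
    le_of_not_gt fun h => (not_le_of_gt hw) ((qinv_cdf_le_iff hs).mpr h.le)

theorem le_cdf_qinv {s : ℝ} (hs : s ∈ Ioo 0 1) : s ≤ cdf μ (qinv (cdf μ) s) :=
  (qinv_cdf_le_iff hs).mp le_rfl

variable [IsProbabilityMeasure μ]

theorem map_qinv_cdf : (volume.restrict (Ioo 0 1)).map (qinv (cdf μ)) = μ := by
  refine Measure.ext_of_Iic _ _ fun z => ?_
  rw [Measure.map_apply_of_aemeasurable aemeasurable_qinv_cdf measurableSet_Iic,
    Measure.restrict_apply' measurableSet_Ioo, inter_comm,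
    measure_congr (inter_preimage_qinv_cdf_Iic_ae_eq z), Real.volume_Ioc, sub_zero, cdf_eq_real,
    ofReal_measureReal]

theorem setIntegral_Iic_eq_intervalIntegral_qinv_cdf {f : ℝ → ℝ} (hf : Measurable f) (z : ℝ) :
    ∫ x in Iic z, f x ∂μ = ∫ t in 0..cdf μ z, f (qinv (cdf μ) t) := by
  conv_lhs => rw [← map_qinv_cdf (μ := μ)]
  rw [setIntegral_map measurableSet_Iic hf.aestronglyMeasurable aemeasurable_qinv_cdf,
    Measure.restrict_restrict' measurableSet_Ioo, inter_comm,
    setIntegral_congr_set (inter_preimage_qinv_cdf_Iic_ae_eq z),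
    intervalIntegral.integral_of_le (cdf_nonneg μ z)]

theorem integrableOn_comp_qinv_cdf {f : ℝ → ℝ} (hf : Integrable f μ) :
    IntegrableOn (fun t => f (qinv (cdf μ) t)) (Icc 0 1) := by
  rw [integrableOn_Icc_iff_integrableOn_Ioo]
  rw [← map_qinv_cdf (μ := μ)] at hf
  exact (integrable_map_measure hf.aestronglyMeasurable aemeasurable_qinv_cdf).mp hf

theorem intervalIntegrable_comp_qinv_cdf {f : ℝ → ℝ} (hf : Integrable f μ) {a b : ℝ}
    (ha : a ∈ Icc 0 1) (hb : b ∈ Icc 0 1) :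
    IntervalIntegrable (fun t => f (qinv (cdf μ) t)) volume a b :=
  ((integrableOn_comp_qinv_cdf hf).mono_set (uIcc_subset_Icc ha hb)).intervalIntegrable

/-- `qinv (cdf μ)` is constantly `z` on the gap `(F(z-), F(z)]` of `F = cdf μ`. -/
theorem intervalIntegral_comp_qinv_cdf_eq_of_mem_gap {f : ℝ → ℝ} (hf : Integrable f μ)
    {z v : ℝ} (hlv : leftLim (cdf μ) z ≤ v) (hvz : v ≤ cdf μ z) :
    ∫ t in 0..v, f (qinv (cdf μ) t)
      = (∫ t in 0..leftLim (cdf μ) z, f (qinv (cdf μ) t)) + (v - leftLim (cdf μ) z) * f z := by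
  set a := leftLim (cdf μ) z
  have ha : a ∈ Icc 0 1 :=
    ⟨(cdf_nonneg μ (z - 1)).trans ((cdf μ).mono.le_leftLim (sub_one_lt z)),
      hlv.trans (hvz.trans (cdf_le_one μ z))⟩
  have hv : v ∈ Icc 0 1 := ⟨ha.1.trans hlv, hvz.trans (cdf_le_one μ z)⟩
  have h0 : (0 : ℝ) ∈ Icc 0 1 := left_mem_Icc.mpr zero_le_one
  have hconst : ∫ t in a..v, f (qinv (cdf μ) t) = ∫ _ in a..v, f z :=
    intervalIntegral.integral_congr_ae <| Eventually.of_forall fun t ht => by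
      rw [uIoc_of_le hlv] at ht
      rw [qinv_eq_of_leftLim_lt (cdf μ).mono ht.1 (ht.2.trans hvz)]
  rw [← intervalIntegral.integral_add_adjacent_intervals
    (intervalIntegrable_comp_qinv_cdf hf h0 ha) (intervalIntegrable_comp_qinv_cdf hf ha hv),
    hconst, intervalIntegral.integral_const, smul_eq_mul]

theorem intervalIntegral_comp_qinv_cdf_le_of_forall_cdf {f g : ℝ → ℝ} (hf : Integrable f μ)
    (hg : Integrable g μ)
    (h : ∀ z, ∫ t in 0..cdf μ z, g (qinv (cdf μ) t) ≤ ∫ t in 0..cdf μ z, f (qinv (cdf μ) t))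
    {s : ℝ} (hs : s ∈ Icc 0 1) :
    ∫ t in 0..s, g (qinv (cdf μ) t) ≤ ∫ t in 0..s, f (qinv (cdf μ) t) := by
  set H := fun s => (∫ t in 0..s, f (qinv (cdf μ) t)) - ∫ t in 0..s, g (qinv (cdf μ) t)
  suffices 0 ≤ H s from sub_nonneg.mp this
  have hf' := integrableOn_comp_qinv_cdf hf
  have hg' := integrableOn_comp_qinv_cdf hg
  have hHcont : ContinuousOn H (Icc 0 1) := by
    rw [← uIcc_of_le zero_le_one] at hf' hg' ⊢
    exact (intervalIntegral.continuousOn_primitive_interval hf').sub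
      (intervalIntegral.continuousOn_primitive_interval hg')
  have hclosure : ∀ x ∈ closure (range (cdf μ)), 0 ≤ H x := by
    have hclosed := hHcont.preimage_isClosed_of_isClosed isClosed_Icc (isClosed_Ici (a := 0))
    refine fun x hx => (closure_minimal ?_ hclosed hx).2
    rintro _ ⟨z, rfl⟩
    exact ⟨⟨cdf_nonneg μ z, cdf_le_one μ z⟩, sub_nonneg.mpr (h z)⟩
  have hmem : ∀ {l : Filter ℝ} [l.NeBot] {x : ℝ}, Tendsto (cdf μ) l (𝓝 x) →
      x ∈ closure (range (cdf μ)) :=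
    fun hx => mem_closure_of_tendsto hx (Eventually.of_forall mem_range_self)
  rcases eq_endpoints_or_mem_Ioo_of_mem_Icc hs with rfl | rfl | hs
  · exact hclosure _ (hmem (tendsto_cdf_atBot μ))
  · exact hclosure _ (hmem (tendsto_cdf_atTop μ))
  set z := qinv (cdf μ) s
  set a := leftLim (cdf μ) z
  have haffine : ∀ v, a ≤ v → v ≤ cdf μ z → H v = H a + (v - a) * (f z - g z) := by
    intro v hav hvz
    simp only [H, intervalIntegral_comp_qinv_cdf_eq_of_mem_gap hf hav hvz,
      intervalIntegral_comp_qinv_cdf_eq_of_mem_gap hg hav hvz]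
    ring
  have has : a ≤ s := leftLim_cdf_qinv_le hs
  have hsz : s ≤ cdf μ z := le_cdf_qinv hs
  have ha : 0 ≤ H a := hclosure _ (hmem ((cdf μ).mono.tendsto_leftLim z))
  have hb : 0 ≤ H (cdf μ z) := hclosure _ (subset_closure (mem_range_self z))
  rw [haffine s has hsz]
  rw [haffine _ (has.trans hsz) le_rfl] at hb
  rcases le_total 0 (f z - g z) with hfg | hfg <;> nlinarith

end Quantile

section BernoulliMixture

variable {Ω : Type*} [MeasurableSpace Ω] {P : Measure Ω} [IsProbabilityMeasure P]

theorem distFun_eq_cdf_map {Z : Ω → ℝ} (hZ : Measurable Z) : distFun P Z = cdf (P.map Z) := by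
  have : IsProbabilityMeasure (P.map Z) := Measure.isProbabilityMeasure_map hZ.aemeasurable
  funext z
  rw [distFun, cdf_eq_real, measureReal_def, Measure.map_apply hZ measurableSet_Iic]
  rfl

theorem defaultIntegral_distFun {Z : Ω → ℝ} (hZ : Measurable Z) {f : ℝ → ℝ} (hf : Measurable f)
    (z : ℝ) : defaultIntegral P Z f (distFun P Z z) = ∫ x in Iic z, f x ∂P.map Z := by
  have : IsProbabilityMeasure (P.map Z) := Measure.isProbabilityMeasure_map hZ.aemeasurable
  rw [defaultIntegral, distFun_eq_cdf_map hZ, setIntegral_Iic_eq_intervalIntegral_qinv_cdf hf]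

namespace IsBMM

variable {N : ℕ} {D : Fin N → Ω → ℝ} {Z : Ω → ℝ} {π : Fin N → ℝ} {p : Fin N → ℝ → ℝ}

theorem integrable (h : IsBMM P D Z π p) (n : Fin N) : Integrable (p n) (P.map Z) :=
  Integrable.of_bound (h.measp n).aestronglyMeasurable 1 <| Eventually.of_forall fun x => by
    rw [Real.norm_eq_abs, abs_of_nonneg (h.p_mem n x).1]
    exact (h.p_mem n x).2

omit [IsProbabilityMeasure P] in
theorem integral_eq_pi (h : IsBMM P D Z π p) (n : Fin N) : ∫ x, p n x ∂P.map Z = π n := by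
  have hcond := h.condVersion n univ MeasurableSet.univ
  rw [preimage_univ, inter_univ, setIntegral_univ, h.prob n] at hcond
  exact ((ENNReal.ofReal_eq_ofReal_iff (h.pi_mem n).1
    (integral_nonneg fun x => (h.p_mem n x).1)).mp hcond).symm

theorem measureReal_inter_lt_eq (h : IsBMM P D Z π p) (n : Fin N) (z : ℝ) :
    P.real ({ω | D n ω = 1} ∩ {ω | z < Z ω})
      = π n - defaultIntegral P Z (p n) (distFun P Z z) := by
  change P.real ({ω | D n ω = 1} ∩ Z ⁻¹' Ioi z) = _
  rw [measureReal_def, h.condVersion n _ measurableSet_Ioi,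
    ENNReal.toReal_ofReal (setIntegral_nonneg measurableSet_Ioi fun x _ => (h.p_mem n x).1),
    defaultIntegral_distFun h.measZ (h.measp n), ← h.integral_eq_pi n,
    ← integral_add_compl measurableSet_Iic (h.integrable n), compl_Iic]
  ring

end IsBMM

end BernoulliMixture

theorem stmt13_general {Ω : Type*} [MeasurableSpace Ω] (P : MeasureTheory.Measure Ω)
    [MeasureTheory.IsProbabilityMeasure P]
    (D D' : Ω → ℝ) (Z Z' : Ω → ℝ) (π : ℝ) (p p' : ℝ → ℝ)
    (hM : IsSIBMM P (fun _ : Fin 1 => D) Z (fun _ => π) (fun _ => p))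
    (hM' : IsSIBMM P (fun _ : Fin 1 => D') Z' (fun _ => π) (fun _ => p'))
    (hZZ' : P.map Z = P.map Z') :
    (∀ s ∈ Set.Icc (0:ℝ) 1, defaultIntegral P Z' p' s ≤ defaultIntegral P Z p s) ↔
    (∀ z : ℝ, P ({ω | D ω = 1} ∩ {ω | z < Z ω})
      ≤ P ({ω | D' ω = 1} ∩ {ω | z < Z' ω})) := by
  have hZ := hM.measZ
  have hZ' := hM'.measZ
  have : IsProbabilityMeasure (P.map Z) := Measure.isProbabilityMeasure_map hZ.aemeasurable
  have hF : distFun P Z' = distFun P Z := by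
    rw [distFun_eq_cdf_map hZ', distFun_eq_cdf_map hZ, hZZ']
  have horder : ∀ z, P ({ω | D ω = 1} ∩ {ω | z < Z ω}) ≤ P ({ω | D' ω = 1} ∩ {ω | z < Z' ω}) ↔
      defaultIntegral P Z' p' (distFun P Z z) ≤ defaultIntegral P Z p (distFun P Z z) := by
    intro z
    rw [← ENNReal.toReal_le_toReal (measure_ne_top _ _) (measure_ne_top _ _), ← measureReal_def,
      ← measureReal_def, hM.measureReal_inter_lt_eq 0 z, hM'.measureReal_inter_lt_eq 0 z, hF]
    exact sub_le_sub_iff_left π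
  simp only [horder, distFun_eq_cdf_map hZ]
  refine ⟨fun h z => h _ ⟨cdf_nonneg _ z, cdf_le_one _ z⟩, fun h s hs => ?_⟩
  simp only [defaultIntegral, distFun_eq_cdf_map hZ, distFun_eq_cdf_map hZ', ← hZZ'] at h ⊢
  exact intervalIntegral_comp_qinv_cdf_le_of_forall_cdf (hM.integrable 0)
    (hZZ' ▸ hM'.integrable 0) h hs

/-- Remark (b): if `Z =_d Z'`, the pointwise ordering of the default
integral functions `G_{D,Z} ≥ G_{D',Z'}` is equivalent to the upper orthant ordering
`P(D = 1, Z > z) ≤ P(D' = 1, Z' > z)` for all `z`. -/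
theorem stmt13 {Ω : Type*} [MeasurableSpace Ω] (P : MeasureTheory.Measure Ω)
    [MeasureTheory.IsProbabilityMeasure P] (hP : MeasureAtomless P)
    (D D' : Ω → ℝ) (Z Z' : Ω → ℝ) (π : ℝ) (hπ : π ∈ Set.Ioo (0:ℝ) 1) (p p' : ℝ → ℝ)
    (hM : IsSIBMM P (fun _ : Fin 1 => D) Z (fun _ => π) (fun _ => p))
    (hM' : IsSIBMM P (fun _ : Fin 1 => D') Z' (fun _ => π) (fun _ => p'))
    (hZZ' : P.map Z = P.map Z') :
    (∀ s ∈ Set.Icc (0:ℝ) 1, defaultIntegral P Z' p' s ≤ defaultIntegral P Z p s) ↔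
    (∀ z : ℝ, P ({ω | D ω = 1} ∩ {ω | z < Z ω})
      ≤ P ({ω | D' ω = 1} ∩ {ω | z < Z' ω})) :=
  stmt13_general P D D' Z Z' π p p' hM hM' hZZ'
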